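/- arXiv:2006.07904 — 4 statements merged into one kernel-verified Lean document; each statement's English description precedes it below -/
import Mathlib

section
/- Bounded second moment of stationary distributions: under Assumptions A1, A2 and the moment part of A3 (E[ξ_1(θ)] = 0 and E[‖ξ_1(θ)‖²] ≤ L_ξ(1+‖θ‖²) for all θ), for any step size η with 0 < η < (α − √(max(α² − (3L² + L_ξ), 0)))/(3L² + L_ξ), every stationary probability measure π of the SGD chain with ∫‖θ‖² dπ(θ) < ∞ satisfies ∫‖θ‖² dπ(θ) ≤ (9ηL² + ηL_ξ + 2β)/(2α − η(3L² + L_ξ)) ≤ 3 + 2β/α. -/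
/-!
Write `θ₁ = (θ₀ - η f'(θ₀)) - η ξ₁(θ₀)`. The noise has mean zero at every fixed point and is
independent of `θ₀`, so the cross term vanishes and
`E‖θ₁‖² = E‖θ₀ - η f'(θ₀)‖² + η² E‖ξ₁(θ₀)‖²`. Dissipativity and linear growth bound the first
term by `(1 - 2ηα + 2η²L²) E‖θ₀‖² + 2ηβ + 2η²L²`, the noise moment bound bounds the second by
`η² L_ξ (1 + E‖θ₀‖²)`, and stationarity gives `E‖θ₁‖² = E‖θ₀‖²`. Solving for `E‖θ₀‖²` gives
`E‖θ₀‖² (2α - η(2L² + L_ξ)) ≤ 2ηL² + ηL_ξ + 2β`, slightly sharper than the stated bound.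
-/

open MeasureTheory ProbabilityTheory Real NNReal ENNReal Filter Topology BoundedContinuousFunction

noncomputable section

/-- The constant step size SGD iterates
`θ_{k+1} = θ_k - η (∇f(θ_k) + ξ_{k+1}(θ_k))`. -/
def sgdIter {d : ℕ} {Ω : Type*} (η : ℝ)
    (f' : EuclideanSpace ℝ (Fin d) → EuclideanSpace ℝ (Fin d))
    (ξ : ℕ → Ω → EuclideanSpace ℝ (Fin d) → EuclideanSpace ℝ (Fin d))
    (θ0 : Ω → EuclideanSpace ℝ (Fin d)) : ℕ → Ω → EuclideanSpace ℝ (Fin d)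
  | 0 => θ0
  | k + 1 => fun ω =>
      sgdIter η f' ξ θ0 k ω -
        η • (f' (sgdIter η f' ξ θ0 k ω) + ξ (k + 1) ω (sgdIter η f' ξ θ0 k ω))

/-- A Borel probability measure `μ` is stationary for the SGD chain: if `θ₀ ∼ μ` is independent
of the noise field `ξ₁`, then `θ₁ = θ₀ - η (∇f(θ₀) + ξ₁(θ₀))` again has law `μ`. -/
def IsStationarySGD {d : ℕ} {Ω : Type*} [MeasurableSpace Ω] (P : Measure Ω) (η : ℝ)
    (f' : EuclideanSpace ℝ (Fin d) → EuclideanSpace ℝ (Fin d))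
    (ξ1 : Ω → EuclideanSpace ℝ (Fin d) → EuclideanSpace ℝ (Fin d))
    (μ : Measure (EuclideanSpace ℝ (Fin d))) : Prop :=
  Measure.map (fun q : Ω × EuclideanSpace ℝ (Fin d) => q.2 - η • (f' q.2 + ξ1 q.1 q.2))
    (P.prod μ) = μ

/-- The density part of Assumption A3: the law of `ξ₁(θ)` has an absolutely continuous component
with Lebesgue density `p θ`, jointly measurable, and uniformly bounded below on bounded sets. -/
def NoiseDensityLB {d : ℕ} {Ω : Type*} [MeasurableSpace Ω] (P : Measure Ω)
    (ξ1 : Ω → EuclideanSpace ℝ (Fin d) → EuclideanSpace ℝ (Fin d))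
    (p : EuclideanSpace ℝ (Fin d) → EuclideanSpace ℝ (Fin d) → ℝ) : Prop :=
  Measurable (Function.uncurry p) ∧ (∀ θ t, 0 ≤ p θ t) ∧
    (∀ θ, (volume.withDensity fun t => ENNReal.ofReal (p θ t)) ≤
      Measure.map (fun ω => ξ1 ω θ) P) ∧
    (∀ C K : Set (EuclideanSpace ℝ (Fin d)), Bornology.IsBounded C → Bornology.IsBounded K →
      ∃ ε > (0 : ℝ), ∀ θ ∈ C, ∀ t ∈ K, ε ≤ p θ t)

open scoped RealInnerProductSpace

section InnerProductSpace

variable {E : Type*} [NormedAddCommGroup E] [InnerProductSpace ℝ E]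

theorem norm_sub_smul_sq_le_of_inner_ge {L α β η : ℝ} (hη : 0 ≤ η) {x v : E}
    (hv : ‖v‖ ≤ L * (1 + ‖x‖)) (hxv : α * ‖x‖ ^ 2 - β ≤ ⟪x, v⟫) :
    ‖x - η • v‖ ^ 2 ≤
      (1 - 2 * η * α + 2 * η ^ 2 * L ^ 2) * ‖x‖ ^ 2 + 2 * η * β + 2 * η ^ 2 * L ^ 2 := by
  have hv2 : ‖v‖ ^ 2 ≤ 2 * L ^ 2 * (1 + ‖x‖ ^ 2) := calc
    ‖v‖ ^ 2 ≤ (L * (1 + ‖x‖)) ^ 2 := pow_le_pow_left₀ (norm_nonneg v) hv 2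
    _ ≤ 2 * L ^ 2 * (1 + ‖x‖ ^ 2) := by nlinarith [mul_nonneg (sq_nonneg L) (sq_nonneg (1 - ‖x‖))]
  rw [norm_sub_sq_real, inner_smul_right, norm_smul, Real.norm_of_nonneg hη, mul_pow]
  nlinarith [mul_le_mul_of_nonneg_left hv2 (sq_nonneg η), mul_le_mul_of_nonneg_left hxv hη]

theorem norm_sub_smul_le_of_norm_le {L η : ℝ} {x v : E} (hv : ‖v‖ ≤ L * (1 + ‖x‖)) :
    ‖x - η • v‖ ≤ |η| * L + (1 + |η| * L) * ‖x‖ := by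
  calc ‖x - η • v‖ ≤ ‖x‖ + |η| * ‖v‖ := by
        simpa [norm_smul] using norm_sub_le x (η • v)
    _ ≤ ‖x‖ + |η| * (L * (1 + ‖x‖)) := by gcongr
    _ = |η| * L + (1 + |η| * L) * ‖x‖ := by ring

theorem MeasureTheory.MemLp.integrable_inner {X : Type*} [MeasurableSpace X] {ν : Measure X}
    {F G : X → E} (hF : MemLp F 2 ν) (hG : MemLp G 2 ν) : Integrable (fun x => ⟪F x, G x⟫) ν := by
  refine (((memLp_two_iff_integrable_sq_norm hF.1).1 hF).add
    ((memLp_two_iff_integrable_sq_norm hG.1).1 hG)).mono' (hF.1.inner hG.1) (.of_forall fun x => ?_)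
  rw [Real.norm_eq_abs, Pi.add_apply]
  nlinarith [abs_real_inner_le_norm (F x) (G x), sq_nonneg (‖F x‖ - ‖G x‖)]

variable [CompleteSpace E] [MeasurableSpace E] {Ω : Type*} [MeasurableSpace Ω]
  {P : Measure Ω} [IsFiniteMeasure P] {μ : Measure E} [IsFiniteMeasure μ]

theorem integral_norm_sub_smul_sq_prod_of_integral_eq_zero {a : E → E} {b : Ω → E → E}
    (ha : MemLp (fun q : Ω × E => a q.2) 2 (P.prod μ))
    (hb : MemLp (fun q : Ω × E => b q.1 q.2) 2 (P.prod μ)) (hmean : ∀ θ, ∫ ω, b ω θ ∂P = 0)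
    (η : ℝ) :
    ∫ q, ‖a q.2 - η • b q.1 q.2‖ ^ 2 ∂(P.prod μ) =
      ∫ q, ‖a q.2‖ ^ 2 ∂(P.prod μ) + η ^ 2 * ∫ q, ‖b q.1 q.2‖ ^ 2 ∂(P.prod μ) := by
  have hcross_int := ha.integrable_inner hb
  have hcross : ∫ q, ⟪a q.2, b q.1 q.2⟫ ∂(P.prod μ) = 0 := by
    rw [integral_prod_symm _ hcross_int]
    refine integral_eq_zero_of_ae ?_
    filter_upwards [(hb.integrable one_le_two).prod_left_ae] with θ hθ
    rw [Pi.zero_apply, integral_inner hθ, hmean, inner_zero_right]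
  have hexp (q : Ω × E) : ‖a q.2 - η • b q.1 q.2‖ ^ 2 =
      ‖a q.2‖ ^ 2 - 2 * η * ⟪a q.2, b q.1 q.2⟫ + η ^ 2 * ‖b q.1 q.2‖ ^ 2 := by
    rw [norm_sub_sq_real, inner_smul_right, norm_smul, mul_pow, Real.norm_eq_abs, sq_abs]
    ring
  have ha2 := (memLp_two_iff_integrable_sq_norm ha.1).1 ha
  have hb2 := (memLp_two_iff_integrable_sq_norm hb.1).1 hb
  have h_first : Integrable (fun q : Ω × E => ‖a q.2‖ ^ 2 - 2 * η * ⟪a q.2, b q.1 q.2⟫)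
      (P.prod μ) := ha2.sub (hcross_int.const_mul _)
  simp_rw [hexp]
  rw [integral_add h_first (hb2.const_mul _),
    integral_sub ha2 (hcross_int.const_mul _), integral_const_mul, integral_const_mul, hcross]
  ring

end InnerProductSpace

section SGD

variable {d : ℕ} {Ω : Type*} [MeasurableSpace Ω] {P : Measure Ω} {η : ℝ}
  {f' : EuclideanSpace ℝ (Fin d) → EuclideanSpace ℝ (Fin d)}
  {ξ1 : Ω → EuclideanSpace ℝ (Fin d) → EuclideanSpace ℝ (Fin d)}
  {μ : Measure (EuclideanSpace ℝ (Fin d))}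

/-- Stationarity forces measurability of the update: `Measure.map` sends a map that is not
a.e.-measurable to `0`. -/
theorem IsStationarySGD.aemeasurable [NeZero μ] (h : IsStationarySGD P η f' ξ1 μ) :
    AEMeasurable (fun q : Ω × EuclideanSpace ℝ (Fin d) => q.2 - η • (f' q.2 + ξ1 q.1 q.2))
      (P.prod μ) := by
  by_contra hg
  exact NeZero.ne μ (h.symm.trans (Measure.map_of_not_aemeasurable hg))

variable [IsProbabilityMeasure P] [IsProbabilityMeasure μ]

theorem IsStationarySGD.integral_norm_sq_eq (h : IsStationarySGD P η f' ξ1 μ)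
    (hξ : Measurable (Function.uncurry ξ1)) (hη : η ≠ 0) {L : ℝ}
    (hA1 : ∀ θ, ‖f' θ‖ ≤ L * (1 + ‖θ‖)) (hmean : ∀ θ, ∫ ω, ξ1 ω θ ∂P = 0)
    (hμmom : Integrable (fun θ => ‖θ‖ ^ 2) μ) :
    ∫ θ, ‖θ‖ ^ 2 ∂μ =
      ∫ θ, ‖θ - η • f' θ‖ ^ 2 ∂μ + η ^ 2 * ∫ θ, ∫ ω, ‖ξ1 ω θ‖ ^ 2 ∂P ∂μ := by
  set g := fun q : Ω × EuclideanSpace ℝ (Fin d) => q.2 - η • (f' q.2 + ξ1 q.1 q.2)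
  have hg_eq (q : Ω × EuclideanSpace ℝ (Fin d)) :
      g q = (q.2 - η • f' q.2) - η • ξ1 q.1 q.2 := by
    simp only [g, smul_add]; abel
  have hg : AEMeasurable g (P.prod μ) := h.aemeasurable
  have hid : MemLp id 2 μ := (memLp_two_iff_integrable_sq_norm aestronglyMeasurable_id).2 hμmom
  have hg_L2 : MemLp g 2 (P.prod μ) := (h.symm ▸ hid : MemLp id 2 _).comp_of_map hg
  have hg_int : ∫ q, ‖g q‖ ^ 2 ∂(P.prod μ) = ∫ θ, ‖θ‖ ^ 2 ∂μ := by
    conv_rhs => rw [← h]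
    exact (integral_map hg (continuous_norm.pow 2).aestronglyMeasurable).symm
  have hξ_meas : AEStronglyMeasurable (fun q : Ω × _ => ξ1 q.1 q.2) (P.prod μ) :=
    hξ.aestronglyMeasurable
  have hsnd_L2 : MemLp (fun q : Ω × EuclideanSpace ℝ (Fin d) => ‖q.2‖) 2 (P.prod μ) :=
    hid.norm.comp_measurePreserving measurePreserving_snd
  have hdom_L2 : MemLp (fun q : Ω × EuclideanSpace ℝ (Fin d) => |η| * L + (1 + |η| * L) * ‖q.2‖)
      2 (P.prod μ) :=
    (memLp_const (|η| * L)).add (hsnd_L2.const_mul (1 + |η| * L))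
  have ha_meas : AEStronglyMeasurable (fun q : Ω × EuclideanSpace ℝ (Fin d) => q.2 - η • f' q.2)
      (P.prod μ) :=
    (hg.aestronglyMeasurable.add (hξ_meas.const_smul η)).congr
      (.of_forall fun q => by simp only [Pi.add_apply, Pi.smul_apply, hg_eq]; abel)
  have ha_L2 : MemLp (fun q : Ω × EuclideanSpace ℝ (Fin d) => q.2 - η • f' q.2) 2 (P.prod μ) :=
    hdom_L2.of_le ha_meas
      (.of_forall fun q => (norm_sub_smul_le_of_norm_le (hA1 q.2)).trans (Real.le_norm_self _))
  have hξ_L2 : MemLp (fun q : Ω × _ => ξ1 q.1 q.2) 2 (P.prod μ) :=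
    ((ha_L2.sub hg_L2).const_smul η⁻¹).ae_eq (.of_forall fun q => by
      simp [hg_eq, smul_smul, hη])
  rw [← hg_int]
  simp only [hg_eq]
  rw [integral_norm_sub_smul_sq_prod_of_integral_eq_zero (a := fun θ => θ - η • f' θ) ha_L2
      hξ_L2 hmean,
    integral_fun_snd (fun θ => ‖θ - η • f' θ‖ ^ 2),
    integral_prod_symm _ ((memLp_two_iff_integrable_sq_norm hξ_meas).1 hξ_L2)]
  simp

theorem IsStationarySGD.integral_norm_sq_mul_le (h : IsStationarySGD P η f' ξ1 μ)
    (hξ : Measurable (Function.uncurry ξ1)) (hη : 0 < η) {L α β Lξ : ℝ}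
    (hA1 : ∀ θ, ‖f' θ‖ ≤ L * (1 + ‖θ‖)) (hA2 : ∀ θ, α * ‖θ‖ ^ 2 - β ≤ ⟪θ, f' θ⟫)
    (hmean : ∀ θ, ∫ ω, ξ1 ω θ ∂P = 0)
    (hmom2 : ∀ θ, ∫ ω, ‖ξ1 ω θ‖ ^ 2 ∂P ≤ Lξ * (1 + ‖θ‖ ^ 2))
    (hμmom : Integrable (fun θ => ‖θ‖ ^ 2) μ) :
    (∫ θ, ‖θ‖ ^ 2 ∂μ) * (2 * α - η * (2 * L ^ 2 + Lξ)) ≤ 2 * η * L ^ 2 + η * Lξ + 2 * β := by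
  set M := ∫ θ, ‖θ‖ ^ 2 ∂μ
  have h_drift : ∫ θ, ‖θ - η • f' θ‖ ^ 2 ∂μ ≤
      (1 - 2 * η * α + 2 * η ^ 2 * L ^ 2) * M + (2 * η * β + 2 * η ^ 2 * L ^ 2) := by
    calc ∫ θ, ‖θ - η • f' θ‖ ^ 2 ∂μ
        ≤ ∫ θ, ((1 - 2 * η * α + 2 * η ^ 2 * L ^ 2) * ‖θ‖ ^ 2 +
            (2 * η * β + 2 * η ^ 2 * L ^ 2)) ∂μ :=
          integral_mono_of_nonneg (.of_forall fun _ => by positivity)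
            ((hμmom.const_mul _).add (integrable_const _))
            (.of_forall fun θ => (norm_sub_smul_sq_le_of_inner_ge hη.le (hA1 θ) (hA2 θ)).trans_eq
              (add_assoc _ _ _))
      _ = _ := by
          rw [integral_add (hμmom.const_mul _) (integrable_const _), integral_const_mul,
            integral_const, probReal_univ, one_smul]
  have h_noise : ∫ θ, ∫ ω, ‖ξ1 ω θ‖ ^ 2 ∂P ∂μ ≤ Lξ * (1 + M) := by
    calc ∫ θ, ∫ ω, ‖ξ1 ω θ‖ ^ 2 ∂P ∂μ ≤ ∫ θ, Lξ * (1 + ‖θ‖ ^ 2) ∂μ :=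
          integral_mono_of_nonneg (.of_forall fun _ => integral_nonneg fun _ => by positivity)
            (((integrable_const 1).add hμmom).const_mul _) (.of_forall hmom2)
      _ = Lξ * (1 + M) := by
          rw [integral_const_mul, integral_add (integrable_const _) hμmom, integral_const,
            probReal_univ, one_smul]
  have h_eq := h.integral_norm_sq_eq hξ hη.ne' hA1 hmean hμmom
  refine le_of_mul_le_mul_left ?_ hη
  nlinarith [mul_le_mul_of_nonneg_left h_noise (sq_nonneg η)]

end SGD

theorem sgd_stationary_second_moment_bound_general
    {d : ℕ} {Ω : Type} [MeasurableSpace Ω] (P : Measure Ω) [IsProbabilityMeasure P]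
    (f' : EuclideanSpace ℝ (Fin d) → EuclideanSpace ℝ (Fin d))
    (ξ : ℕ → Ω → EuclideanSpace ℝ (Fin d) → EuclideanSpace ℝ (Fin d))
    (hξmeas : ∀ k, Measurable (Function.uncurry (ξ k)))
    (L : ℝ)
    (hA1 : ∀ θ, ‖f' θ‖ ≤ L * (1 + ‖θ‖))
    (α β : ℝ) (hα : 0 < α) (hβ : 0 < β)
    (hA2 : ∀ θ, α * ‖θ‖ ^ 2 - β ≤ (inner ℝ θ (f' θ) : ℝ))
    (Lξ : ℝ) (hLξ : 0 < Lξ)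
    (hmean : ∀ θ, ∫ ω, ξ 1 ω θ ∂P = 0)
    (hmom2 : ∀ θ, ∫ ω, ‖ξ 1 ω θ‖ ^ 2 ∂P ≤ Lξ * (1 + ‖θ‖ ^ 2))
    (η : ℝ) (hη0 : 0 < η)
    (hη : η < (α - Real.sqrt (max (α ^ 2 - (3 * L ^ 2 + Lξ)) 0)) / (3 * L ^ 2 + Lξ))
    (μ : Measure (EuclideanSpace ℝ (Fin d)))
    (hμ : IsProbabilityMeasure μ) (hμstat : IsStationarySGD P η f' (ξ 1) μ)
    (hμmom : Integrable (fun θ => ‖θ‖ ^ 2) μ) :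
    (∫ θ, ‖θ‖ ^ 2 ∂μ) ≤ (9 * η * L ^ 2 + η * Lξ + 2 * β) / (2 * α - η * (3 * L ^ 2 + Lξ)) ∧
    (9 * η * L ^ 2 + η * Lξ + 2 * β) / (2 * α - η * (3 * L ^ 2 + Lξ)) ≤ 3 + 2 * β / α := by
  have hηS : η * (3 * L ^ 2 + Lξ) < α := by
    have := (lt_div_iff₀ (by positivity)).1 hη
    linarith [Real.sqrt_nonneg (max (α ^ 2 - (3 * L ^ 2 + Lξ)) 0)]
  have hD : 0 < 2 * α - η * (3 * L ^ 2 + Lξ) := by linarith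
  have hM := hμstat.integral_norm_sq_mul_le (hξmeas 1) hη0 hA1 hA2 hmean hmom2 hμmom
  have hM0 : 0 ≤ ∫ θ, ‖θ‖ ^ 2 ∂μ := integral_nonneg fun θ => by positivity
  constructor
  · rw [le_div_iff₀ hD]
    nlinarith [mul_nonneg (mul_nonneg hη0.le (sq_nonneg L)) hM0]
  · rw [show 3 + 2 * β / α = (3 * α + 2 * β) / α by field_simp, div_le_div_iff₀ hD hα]
    nlinarith [mul_le_mul_of_nonneg_left hηS.le (by positivity : 0 ≤ 6 * α + 2 * β),
      mul_nonneg (mul_nonneg hη0.le hLξ.le) hα.le]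

/-- Corollary A.2: bound on the second moment of any stationary distribution of the constant
step size SGD chain. -/
theorem sgd_stationary_second_moment_bound
    {d : ℕ} (hd : 1 ≤ d) {Ω : Type} [MeasurableSpace Ω] (P : Measure Ω) [IsProbabilityMeasure P]
    (f : EuclideanSpace ℝ (Fin d) → ℝ)
    (f' : EuclideanSpace ℝ (Fin d) → EuclideanSpace ℝ (Fin d))
    (hf : ∀ θ, HasGradientAt f (f' θ) θ)
    (ξ : ℕ → Ω → EuclideanSpace ℝ (Fin d) → EuclideanSpace ℝ (Fin d))
    (hξmeas : ∀ k, Measurable (Function.uncurry (ξ k)))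
    (hξindep : iIndepFun (fun k ω => ξ (k + 1) ω) P)
    (hξident : ∀ k, Measure.map (fun ω => ξ (k + 1) ω) P = Measure.map (fun ω => ξ 1 ω) P)
    (L : ℝ) (hL : 0 ≤ L)
    (hA1 : ∀ θ, ‖f' θ‖ ≤ L * (1 + ‖θ‖))
    (α β : ℝ) (hα : 0 < α) (hβ : 0 < β)
    (hA2 : ∀ θ, α * ‖θ‖ ^ 2 - β ≤ (inner ℝ θ (f' θ) : ℝ))
    (Lξ : ℝ) (hLξ : 0 < Lξ)
    (hmean : ∀ θ, ∫ ω, ξ 1 ω θ ∂P = 0)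
    (hmom2 : ∀ θ, ∫ ω, ‖ξ 1 ω θ‖ ^ 2 ∂P ≤ Lξ * (1 + ‖θ‖ ^ 2))
    (η : ℝ) (hη0 : 0 < η)
    (hη : η < (α - Real.sqrt (max (α ^ 2 - (3 * L ^ 2 + Lξ)) 0)) / (3 * L ^ 2 + Lξ))
    (μ : Measure (EuclideanSpace ℝ (Fin d)))
    (hμ : IsProbabilityMeasure μ) (hμstat : IsStationarySGD P η f' (ξ 1) μ)
    (hμmom : Integrable (fun θ => ‖θ‖ ^ 2) μ) :
    (∫ θ, ‖θ‖ ^ 2 ∂μ) ≤ (9 * η * L ^ 2 + η * Lξ + 2 * β) / (2 * α - η * (3 * L ^ 2 + Lξ)) ∧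
    (9 * η * L ^ 2 + η * Lξ + 2 * β) / (2 * α - η * (3 * L ^ 2 + Lξ)) ≤ 3 + 2 * β / α :=
  sgd_stationary_second_moment_bound_general P f' ξ hξmeas L hA1 α β hα hβ hA2 Lξ hLξ hmean hmom2 η
    hη0 hη μ hμ hμstat hμmom
end
end

section
/- Minorization: under Assumptions A1 and A3 and for any η > 0, for every nonempty bounded Borel set C ⊆ ℝ^d with positive Lebesgue measure there exist a constant ζ > 0 and a Borel probability measure ν on ℝ^d with ν(C) = 1 such that for every θ ∈ C and every Borel set A ⊆ ℝ^d, ℙ(θ − η(∇f(θ) + ξ_1(θ)) ∈ A) ≥ ζ ν(A). -/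
open MeasureTheory ProbabilityTheory Real NNReal ENNReal Filter Topology BoundedContinuousFunction

noncomputable section

/-- A Borel probability measure `μ` is stationary for the SGD chain: if `θ₀ ∼ μ` is independent
of the noise field `ξ₁`, then `θ₁ = θ₀ - η (∇f(θ₀) + ξ₁(θ₀))` again has law `μ`. -/
def SGDIsStationary {d : ℕ} {Ω : Type*} [MeasurableSpace Ω] (P : Measure Ω) (η : ℝ)
    (f' : EuclideanSpace ℝ (Fin d) → EuclideanSpace ℝ (Fin d))
    (ξ1 : Ω → EuclideanSpace ℝ (Fin d) → EuclideanSpace ℝ (Fin d))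
    (μ : Measure (EuclideanSpace ℝ (Fin d))) : Prop :=
  Measure.map (fun q : Ω × EuclideanSpace ℝ (Fin d) => q.2 - η • (f' q.2 + ξ1 q.1 q.2))
    (P.prod μ) = μ

/-!
For fixed `θ`, the step `t ↦ θ - η (∇f(θ) + t)` is an affine bijection of the noise with
Jacobian `η^d`. A noise value moving a point of the bounded set `C` back into `C` has norm at most
`2M/η + L(1 + M)` when `C ⊆ B(0, M)`, by linear growth of `∇f`; on that ball the noise density is
at least some `ε > 0`. Hence the law of the step dominates `ε η^{-d}` times Lebesgue measure on
`C`, which is the minorization with `ν` the normalized Lebesgue measure on `C` and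
`ζ = ε η^{-d} vol(C)`.
-/

section Minorization

variable {E : Type*} [NormedAddCommGroup E] [NormedSpace ℝ E]

theorem norm_le_of_norm_sub_smul_add_le {η M : ℝ} (hη : η ≠ 0) {θ g t : E}
    (h : ‖θ - η • (g + t)‖ ≤ M) : ‖t‖ ≤ |η|⁻¹ * (‖θ‖ + M) + ‖g‖ := by
  have ht : t = η⁻¹ • (θ - (θ - η • (g + t))) - g := by
    simp [smul_smul, inv_mul_cancel₀ hη]
  rw [ht]
  calc ‖η⁻¹ • (θ - (θ - η • (g + t))) - g‖
      ≤ |η|⁻¹ * (‖θ‖ + ‖θ - η • (g + t)‖) + ‖g‖ := by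
        refine (norm_sub_le _ _).trans (add_le_add_left ?_ _)
        rw [norm_smul, norm_inv, Real.norm_eq_abs]
        gcongr
        exact norm_sub_le _ _
    _ ≤ |η|⁻¹ * (‖θ‖ + M) + ‖g‖ := by gcongr

variable [MeasurableSpace E] [BorelSpace E] [FiniteDimensional ℝ E]
  (μ : Measure E) [μ.IsAddHaarMeasure]

theorem addHaar_preimage_sub_smul {c : ℝ} (hc : c ≠ 0) (b : E) (S : Set E) :
    μ ((fun t => b - c • t) ⁻¹' S) = ENNReal.ofReal (|c| ^ Module.finrank ℝ E)⁻¹ * μ S := by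
  have hT : (fun t : E => b - c • t) = (b + ·) ∘ ((-c) • ·) := by
    funext t
    simp [sub_eq_add_neg]
  rw [hT, Set.preimage_comp, Measure.addHaar_preimage_smul μ (neg_ne_zero.2 hc),
    measure_preimage_add, abs_inv, abs_pow, abs_neg]

theorem mul_measure_inter_le_withDensity_apply {α : Type*} [MeasurableSpace α] {ν : Measure α}
    {q : α → ℝ≥0∞} {ε : ℝ≥0∞} {B S : Set α} (hB : MeasurableSet B) (hS : MeasurableSet S)
    (hq : ∀ x ∈ S, ε ≤ q x) : ε * ν (B ∩ S) ≤ ν.withDensity q B := by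
  rw [withDensity_apply _ hB, ← setLIntegral_const]
  calc ∫⁻ _ in B ∩ S, ε ∂ν ≤ ∫⁻ x in B ∩ S, q x ∂ν :=
        setLIntegral_mono' (hB.inter hS) fun x hx => hq x hx.2
    _ ≤ ∫⁻ x in B, q x ∂ν := lintegral_mono_set Set.inter_subset_left

theorem mul_measure_inter_le_measure_sgd_step {Ω : Type*} [MeasurableSpace Ω] {P : Measure Ω}
    {X : Ω → E} (hX : Measurable X) {q : E → ℝ≥0∞} (hq : μ.withDensity q ≤ P.map X)
    {η : ℝ} (hη : η ≠ 0) {θ g : E} {C A : Set E} (hC : MeasurableSet C) (hA : MeasurableSet A)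
    {ε : ℝ≥0∞} (hqC : ∀ t, θ - η • (g + t) ∈ C → ε ≤ q t) :
    ε * ENNReal.ofReal (|η| ^ Module.finrank ℝ E)⁻¹ * μ (C ∩ A) ≤
      P {ω | θ - η • (g + X ω) ∈ A} := by
  set T : E → E := fun t => θ - η • (g + t)
  have hT : T = fun t => (θ - η • g) - η • t := by
    funext t
    simp only [T, smul_add, sub_sub]
  have hTmeas : Measurable T := by rw [hT]; fun_prop
  calc ε * ENNReal.ofReal (|η| ^ Module.finrank ℝ E)⁻¹ * μ (C ∩ A)
      = ε * μ (T ⁻¹' A ∩ T ⁻¹' C) := by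
        rw [← Set.preimage_inter, Set.inter_comm, hT, addHaar_preimage_sub_smul μ hη, mul_assoc]
    _ ≤ μ.withDensity q (T ⁻¹' A) :=
        mul_measure_inter_le_withDensity_apply (hTmeas hA) (hTmeas hC) hqC
    _ ≤ P.map X (T ⁻¹' A) := hq _
    _ = P {ω | θ - η • (g + X ω) ∈ A} := Measure.map_apply hX (hTmeas hA)

end Minorization

theorem sgd_minorization_general
    {d : ℕ} {Ω : Type} [MeasurableSpace Ω] (P : Measure Ω)
    (f' : EuclideanSpace ℝ (Fin d) → EuclideanSpace ℝ (Fin d))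
    (ξ1 : Ω → EuclideanSpace ℝ (Fin d) → EuclideanSpace ℝ (Fin d))
    (hξmeas : Measurable (Function.uncurry ξ1))
    (L : ℝ) (hL : 0 ≤ L)
    (hA1 : ∀ θ, ‖f' θ‖ ≤ L * (1 + ‖θ‖))
    (p : EuclideanSpace ℝ (Fin d) → EuclideanSpace ℝ (Fin d) → ℝ)
    (hp : NoiseDensityLB P ξ1 p)
    (η : ℝ) (hη0 : 0 < η) :
    ∀ C : Set (EuclideanSpace ℝ (Fin d)), C.Nonempty → Bornology.IsBounded C →
      MeasurableSet C → 0 < volume C →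
      ∃ ζ : ℝ≥0, 0 < ζ ∧ ∃ ν : Measure (EuclideanSpace ℝ (Fin d)),
        IsProbabilityMeasure ν ∧ ν C = 1 ∧
        ∀ θ ∈ C, ∀ A : Set (EuclideanSpace ℝ (Fin d)), MeasurableSet A →
          (ζ : ℝ≥0∞) * ν A ≤ P {ω | θ - η • (f' θ + ξ1 ω θ) ∈ A} := by
  intro C _ hCb hCmeas hC0
  obtain ⟨M, hM⟩ := (Metric.isBounded_iff_subset_closedBall 0).mp hCb
  have hf'C : ∀ θ ∈ C, ‖f' θ‖ ≤ L * (1 + M) := fun θ hθ =>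
    (hA1 θ).trans (by gcongr; exact mem_closedBall_zero_iff.1 (hM hθ))
  obtain ⟨ε, hε0, hεlb⟩ := hp.2.2.2 C (Metric.closedBall 0 (|η|⁻¹ * (M + M) + L * (1 + M))) hCb
    Metric.isBounded_closedBall
  have hCtop : volume C ≠ ⊤ := hCb.measure_lt_top.ne
  set Z := ENNReal.ofReal ε * ENNReal.ofReal (|η| ^ d)⁻¹ * volume C
  have hZ0 : Z ≠ 0 := by simp [Z, hε0, hη0.ne', hC0.ne']
  have hZtop : Z ≠ ⊤ :=
    ENNReal.mul_ne_top (ENNReal.mul_ne_top ENNReal.ofReal_ne_top ENNReal.ofReal_ne_top) hCtop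
  refine ⟨Z.toNNReal, ENNReal.toNNReal_pos hZ0 hZtop, volume[|C],
    cond_isProbabilityMeasure_of_finite hC0.ne' hCtop, cond_apply_self hC0.ne' hCtop,
    fun θ hθ A hA => ?_⟩
  have hdensity : ∀ t, θ - η • (f' θ + t) ∈ C → ENNReal.ofReal ε ≤ ENNReal.ofReal (p θ t) :=
    fun t ht => ENNReal.ofReal_le_ofReal <| hεlb θ hθ t <| mem_closedBall_zero_iff.2 <|
      (norm_le_of_norm_sub_smul_add_le hη0.ne' (mem_closedBall_zero_iff.1 (hM ht))).trans
        (by gcongr; exacts [mem_closedBall_zero_iff.1 (hM hθ), hf'C θ hθ])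
  have key := mul_measure_inter_le_measure_sgd_step volume
    (hξmeas.comp measurable_prodMk_right) (hp.2.2.1 θ) hη0.ne' hCmeas hA hdensity
  rw [finrank_euclideanSpace_fin] at key
  calc (Z.toNNReal : ℝ≥0∞) * volume[A|C]
      = ENNReal.ofReal ε * ENNReal.ofReal (|η| ^ d)⁻¹ * volume (C ∩ A) *
          (volume C * (volume C)⁻¹) := by
        rw [ENNReal.coe_toNNReal hZtop, cond_apply hCmeas]; ring
    _ ≤ _ := by rwa [ENNReal.mul_inv_cancel hC0.ne' hCtop, mul_one]

/-- Corollary A.4 (minorization condition) for one step of constant step size SGD. -/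
theorem sgd_minorization
    {d : ℕ} (hd : 1 ≤ d) {Ω : Type} [MeasurableSpace Ω] (P : Measure Ω) [IsProbabilityMeasure P]
    (f : EuclideanSpace ℝ (Fin d) → ℝ)
    (f' : EuclideanSpace ℝ (Fin d) → EuclideanSpace ℝ (Fin d))
    (hf : ∀ θ, HasGradientAt f (f' θ) θ)
    (ξ1 : Ω → EuclideanSpace ℝ (Fin d) → EuclideanSpace ℝ (Fin d))
    (hξmeas : Measurable (Function.uncurry ξ1))
    (L : ℝ) (hL : 0 ≤ L)
    (hA1 : ∀ θ, ‖f' θ‖ ≤ L * (1 + ‖θ‖))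
    (Lξ : ℝ) (hLξ : 0 < Lξ)
    (hmean : ∀ θ, ∫ ω, ξ1 ω θ ∂P = 0)
    (hmom2 : ∀ θ, ∫ ω, ‖ξ1 ω θ‖ ^ 2 ∂P ≤ Lξ * (1 + ‖θ‖ ^ 2))
    (p : EuclideanSpace ℝ (Fin d) → EuclideanSpace ℝ (Fin d) → ℝ)
    (hp : NoiseDensityLB P ξ1 p)
    (η : ℝ) (hη0 : 0 < η) :
    ∀ C : Set (EuclideanSpace ℝ (Fin d)), C.Nonempty → Bornology.IsBounded C →
      MeasurableSet C → 0 < volume C →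
      ∃ ζ : ℝ≥0, 0 < ζ ∧ ∃ ν : Measure (EuclideanSpace ℝ (Fin d)),
        IsProbabilityMeasure ν ∧ ν C = 1 ∧
        ∀ θ ∈ C, ∀ A : Set (EuclideanSpace ℝ (Fin d)), MeasurableSet A →
          (ζ : ℝ≥0∞) * ν A ≤ P {ω | θ - η • (f' θ + ξ1 ω θ) ∈ A} :=
  sgd_minorization_general P f' ξ1 hξmeas L hL hA1 p hp η hη0
end
end

section
/- Dissipativity around a critical point: let f : ℝ^d → ℝ be differentiable with ‖∇f(θ)‖ ≤ L(1+‖θ‖) for all θ (some L ≥ 0) and ⟨θ, ∇f(θ)⟩ ≥ α‖θ‖² − β for all θ (some α, β > 0). Then for every critical point θ* of f (∇f(θ*) = 0) and all θ ∈ ℝ^d: ⟨∇f(θ), θ − θ*⟩ ≥ (α/2)‖θ − θ*‖² − β', where β' := β + (√α + 2L/√α)² ‖θ*‖² + L‖θ*‖. -/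
open Real

/-! Expanding `⟪∇f(θ), θ - θ*⟫ = ⟪θ, ∇f(θ)⟫ - ⟪∇f(θ), θ*⟫`, dissipativity bounds the first term
from below by `α‖θ‖² - β` and linear growth bounds the second from above by `L(1 + ‖θ‖)‖θ*‖`.
What remains is a quadratic inequality in `x = ‖θ‖`, `y = ‖θ*‖` after `‖θ - θ*‖ ≤ x + y`. -/

lemma sq_sqrt_add_div_sqrt {a : ℝ} (ha : 0 < a) (b : ℝ) :
    (√a + b / √a) ^ 2 = a + 2 * b + b ^ 2 / a := by
  have hs : √a ^ 2 = a := sq_sqrt ha.le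
  have hs0 : √a ≠ 0 := (sqrt_pos.2 ha).ne'
  field_simp
  rw [hs]
  ring

lemma half_mul_add_sq_le {α L x y : ℝ} (hα : 0 < α) (hL : 0 ≤ L) :
    α / 2 * (x + y) ^ 2 ≤ α * x ^ 2 - L * x * y + (√α + 2 * L / √α) ^ 2 * y ^ 2 := by
  rw [sq_sqrt_add_div_sqrt hα, ← sub_nonneg]
  have hgap : α * x ^ 2 - L * x * y + (α + 2 * (2 * L) + (2 * L) ^ 2 / α) * y ^ 2
      - α / 2 * (x + y) ^ 2
      = ((α * x - (α + L) * y) ^ 2 + (6 * α * L + 7 * L ^ 2) * y ^ 2) / (2 * α) := by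
    field_simp
    ring
  rw [hgap]
  positivity

theorem dissipativity_around_critical_point_general
    {d : ℕ}
    (f' : EuclideanSpace ℝ (Fin d) → EuclideanSpace ℝ (Fin d))
    (L : ℝ) (hL : 0 ≤ L)
    (hA1 : ∀ θ, ‖f' θ‖ ≤ L * (1 + ‖θ‖))
    (α β : ℝ) (hα : 0 < α)
    (hA2 : ∀ θ, α * ‖θ‖ ^ 2 - β ≤ (inner ℝ θ (f' θ) : ℝ))
    (θstar : EuclideanSpace ℝ (Fin d)) :
    ∀ θ : EuclideanSpace ℝ (Fin d),
      (α / 2) * ‖θ - θstar‖ ^ 2 -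
          (β + (Real.sqrt α + 2 * L / Real.sqrt α) ^ 2 * ‖θstar‖ ^ 2 + L * ‖θstar‖) ≤
        (inner ℝ (f' θ) (θ - θstar) : ℝ) := by
  intro θ
  have hcross : inner ℝ (f' θ) θstar ≤ L * (1 + ‖θ‖) * ‖θstar‖ :=
    (real_inner_le_norm _ _).trans (mul_le_mul_of_nonneg_right (hA1 θ) (norm_nonneg _))
  have hdist : α / 2 * ‖θ - θstar‖ ^ 2 ≤ α / 2 * (‖θ‖ + ‖θstar‖) ^ 2 := by
    gcongr
    exact norm_sub_le _ _
  have hquad := half_mul_add_sq_le (x := ‖θ‖) (y := ‖θstar‖) hα hL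
  rw [inner_sub_right, real_inner_comm]
  linarith [hA2 θ]

/-- Lemma A.7: a dissipative function with linearly growing gradient is dissipative around any
of its critical points. -/
theorem dissipativity_around_critical_point
    {d : ℕ} (f : EuclideanSpace ℝ (Fin d) → ℝ)
    (f' : EuclideanSpace ℝ (Fin d) → EuclideanSpace ℝ (Fin d))
    (hf : ∀ θ, HasGradientAt f (f' θ) θ)
    (L : ℝ) (hL : 0 ≤ L)
    (hA1 : ∀ θ, ‖f' θ‖ ≤ L * (1 + ‖θ‖))
    (α β : ℝ) (hα : 0 < α) (hβ : 0 < β)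
    (hA2 : ∀ θ, α * ‖θ‖ ^ 2 - β ≤ (inner ℝ θ (f' θ) : ℝ))
    (θstar : EuclideanSpace ℝ (Fin d)) (hcrit : f' θstar = 0) :
    ∀ θ : EuclideanSpace ℝ (Fin d),
      (α / 2) * ‖θ - θstar‖ ^ 2 -
          (β + (Real.sqrt α + 2 * L / Real.sqrt α) ^ 2 * ‖θstar‖ ^ 2 + L * ‖θstar‖) ≤
        (inner ℝ (f' θ) (θ - θstar) : ℝ) :=
  dissipativity_around_critical_point_general f' L hL hA1 α β hα hA2 θstar
end

section
/- Polyak–Łojasiewicz-type inequality for a non-convex example: fix λ > 0 and define f : ℝ^d → ℝ by f(θ) = (1/2) log(1 + ‖θ‖²) + (λ/2)‖θ‖². Then θ* = 0 is the global minimizer of f, the gradient satisfies ‖∇f(θ)‖² = ‖θ‖² (λ + 1/(1+‖θ‖²))², and for all θ ∈ ℝ^d: ‖∇f(θ)‖² ≥ (2λ²/(1+λ)) (f(θ) − f(0)). -/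
/-!
The objective is radial, `f θ = φ (‖θ‖²)`, so its gradient is `2 φ'(‖θ‖²) θ`. The log term only
adds a positive multiple of `θ` to `λ θ`, whence `‖∇f θ‖² ≥ λ² ‖θ‖²`, while `log (1 + s) ≤ s` gives
`f θ - f 0 ≤ (1 + λ)/2 ‖θ‖²`. Combining the two bounds yields the Polyak–Łojasiewicz inequality.
-/

open Real

variable {E : Type*} [NormedAddCommGroup E]

theorem HasDerivAt.hasGradientAt_comp_norm_sq [InnerProductSpace ℝ E] [CompleteSpace E]
    {φ : ℝ → ℝ} {φ' : ℝ} {x : E} (h : HasDerivAt φ φ' (‖x‖ ^ 2)) :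
    HasGradientAt (fun y => φ (‖y‖ ^ 2)) ((2 * φ') • x) x := by
  have hdual : InnerProductSpace.toDual ℝ E ((2 * φ') • x) = φ' • 2 • innerSL ℝ x := by
    ext y
    simp only [map_smul, _root_.smul_apply, InnerProductSpace.toDual_apply_apply,
      smul_eq_mul, coe_innerSL_apply, nsmul_eq_mul, Nat.cast_ofNat]
    ring
  rw [hasGradientAt_iff_hasFDerivAt, hdual]
  exact h.comp_hasFDerivAt x (hasStrictFDerivAt_norm_sq x).hasFDerivAt

namespace HeavyTailedMLE

noncomputable def objective (lam : ℝ) (θ : E) : ℝ :=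
  1 / 2 * log (1 + ‖θ‖ ^ 2) + lam / 2 * ‖θ‖ ^ 2

noncomputable def grad [NormedSpace ℝ E] (lam : ℝ) (θ : E) : E :=
  (lam + 1 / (1 + ‖θ‖ ^ 2)) • θ

@[simp]
theorem objective_zero (lam : ℝ) : objective lam (0 : E) = 0 := by
  simp [objective]

theorem objective_pos {lam : ℝ} (hlam : 0 ≤ lam) {θ : E} (hθ : θ ≠ 0) :
    0 < objective lam θ := by
  have hlog : 0 < log (1 + ‖θ‖ ^ 2) :=
    log_pos (lt_add_of_pos_right 1 (pow_pos (norm_pos_iff.2 hθ) 2))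
  unfold objective
  positivity

theorem objective_le_norm_sq (lam : ℝ) (θ : E) : objective lam θ ≤ (1 + lam) / 2 * ‖θ‖ ^ 2 := by
  have hlog : log (1 + ‖θ‖ ^ 2) ≤ ‖θ‖ ^ 2 := by
    linarith [log_le_sub_one_of_pos (show 0 < 1 + ‖θ‖ ^ 2 by positivity)]
  unfold objective
  linarith

theorem hasGradientAt_objective [InnerProductSpace ℝ E] [CompleteSpace E] (lam : ℝ) (θ : E) :
    HasGradientAt (objective lam) (grad lam θ) θ := by
  have hs : 0 < 1 + ‖θ‖ ^ 2 := by positivity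
  have hφ : HasDerivAt (fun s => 1 / 2 * log (1 + s) + lam / 2 * s)
      (1 / 2 * (1 / (1 + ‖θ‖ ^ 2)) + lam / 2) (‖θ‖ ^ 2) :=
    ((((hasDerivAt_id' (‖θ‖ ^ 2)).const_add 1).log hs.ne').const_mul (1 / 2)).fun_add
      (hasDerivAt_const_mul (lam / 2))
  have hgrad : grad lam θ = (2 * (1 / 2 * (1 / (1 + ‖θ‖ ^ 2)) + lam / 2)) • θ := by
    rw [grad]
    congr 1
    ring
  rw [hgrad]
  exact hφ.hasGradientAt_comp_norm_sq

section NormedSpace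

variable [NormedSpace ℝ E]

theorem norm_grad_sq (lam : ℝ) (θ : E) :
    ‖grad lam θ‖ ^ 2 = ‖θ‖ ^ 2 * (lam + 1 / (1 + ‖θ‖ ^ 2)) ^ 2 := by
  rw [grad, norm_smul, mul_pow, Real.norm_eq_abs, sq_abs, mul_comm]

theorem sq_mul_norm_sq_le_norm_grad_sq {lam : ℝ} (hlam : 0 ≤ lam) (θ : E) :
    lam ^ 2 * ‖θ‖ ^ 2 ≤ ‖grad lam θ‖ ^ 2 := by
  rw [norm_grad_sq, mul_comm]
  gcongr
  linarith [show 0 ≤ 1 / (1 + ‖θ‖ ^ 2) by positivity]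

theorem polyak_lojasiewicz {lam : ℝ} (hlam : 0 ≤ lam) (θ : E) :
    2 * lam ^ 2 / (1 + lam) * objective lam θ ≤ ‖grad lam θ‖ ^ 2 :=
  calc 2 * lam ^ 2 / (1 + lam) * objective lam θ
      ≤ 2 * lam ^ 2 / (1 + lam) * ((1 + lam) / 2 * ‖θ‖ ^ 2) := by
        gcongr
        exact objective_le_norm_sq lam θ
    _ = lam ^ 2 * ‖θ‖ ^ 2 := by field_simp
    _ ≤ ‖grad lam θ‖ ^ 2 := sq_mul_norm_sq_le_norm_grad_sq hlam θ

end NormedSpace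

end HeavyTailedMLE

open HeavyTailedMLE in
/-- Polyak–Łojasiewicz-type inequality for the simplified non-convex regularized heavy-tailed
MLE objective `f(θ) = (1/2) log(1+‖θ‖²) + (λ/2)‖θ‖²`. -/
theorem simplified_heavy_tailed_mle_PL
    {d : ℕ} (lam : ℝ) (hlam : 0 < lam) :
    let f : EuclideanSpace ℝ (Fin d) → ℝ := fun θ =>
      (1 / 2) * Real.log (1 + ‖θ‖ ^ 2) + lam / 2 * ‖θ‖ ^ 2
    let G : EuclideanSpace ℝ (Fin d) → EuclideanSpace ℝ (Fin d) := fun θ =>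
      (lam + 1 / (1 + ‖θ‖ ^ 2)) • θ
    (∀ θ : EuclideanSpace ℝ (Fin d), θ ≠ 0 → f 0 < f θ) ∧
    (∀ θ, HasGradientAt f (G θ) θ) ∧
    (∀ θ : EuclideanSpace ℝ (Fin d),
      ‖G θ‖ ^ 2 = ‖θ‖ ^ 2 * (lam + 1 / (1 + ‖θ‖ ^ 2)) ^ 2) ∧
    (∀ θ : EuclideanSpace ℝ (Fin d),
      (2 * lam ^ 2 / (1 + lam)) * (f θ - f 0) ≤ ‖G θ‖ ^ 2) := by
  intro f G
  have hf0 : f 0 = 0 := objective_zero lam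
  refine ⟨fun θ hθ => ?_, hasGradientAt_objective lam, norm_grad_sq lam, fun θ => ?_⟩
  · rw [hf0]
    exact objective_pos hlam.le hθ
  · rw [hf0, sub_zero]
    exact polyak_lojasiewicz hlam.le θ
end
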